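/- arXiv:1409.0584 — 2 statements merged into one kernel-verified Lean document; each statement's English description precedes it below -/
import Mathlib

section
/- The function g(x) = x·H(1/2 − 1/x), defined for x > 2 where H is the binary entropy function, is concave. Consequently, for fixed x > 2 and all ε with |ε| small enough that both arguments stay in the domain, f(ε) = g(x+ε) + g(x−ε) is maximized at ε = 0. -/
/-!
Up to the factor `1 / log 2`, `gFun x = x * h ((x / 2 - 1) / x)` with `h` the natural-log binary
entropy. This is the perspective `(t, v) ↦ t * h (v / t)` of the concave function `h`, evaluated
along the affine line `v = x / 2 - 1`. Perspectives of concave functions are concave: at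
`t = a t₁ + b t₂` the argument `v / t` is the convex combination of `v₁ / t₁` and `v₂ / t₂` with
weights `a t₁ / t` and `b t₂ / t`.
-/

open Set

noncomputable def binEntropy (p : ℝ) : ℝ :=
  -(p * Real.logb 2 p) - (1 - p) * Real.logb 2 (1 - p)

noncomputable def gFun (x : ℝ) : ℝ := x * binEntropy (1/2 - 1/x)

theorem ConcaveOn.perspective {E : Type*} [AddCommGroup E] [Module ℝ E] {s : Set E}
    {f : E → ℝ} (hf : ConcaveOn ℝ s f) :
    ConcaveOn ℝ {p : ℝ × E | 0 < p.1 ∧ p.1⁻¹ • p.2 ∈ s} (fun p => p.1 * f (p.1⁻¹ • p.2)) := by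
  have key : ∀ ⦃t₁ t₂ : ℝ⦄ ⦃v₁ v₂ : E⦄ ⦃a b : ℝ⦄, 0 < t₁ → 0 < t₂ → t₁⁻¹ • v₁ ∈ s →
      t₂⁻¹ • v₂ ∈ s → 0 ≤ a → 0 ≤ b → a + b = 1 →
      0 < a * t₁ + b * t₂ ∧ (a * t₁ + b * t₂)⁻¹ • (a • v₁ + b • v₂) ∈ s ∧
      a * (t₁ * f (t₁⁻¹ • v₁)) + b * (t₂ * f (t₂⁻¹ • v₂)) ≤
        (a * t₁ + b * t₂) * f ((a * t₁ + b * t₂)⁻¹ • (a • v₁ + b • v₂)) := by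
    intro t₁ t₂ v₁ v₂ a b ht₁ ht₂ hu₁ hu₂ ha hb hab
    set t := a * t₁ + b * t₂
    have ht : 0 < t := by
      rcases ha.eq_or_lt with rfl | ha
      · simp_all [t]
      · positivity
    have hα : 0 ≤ a * t₁ / t := by positivity
    have hβ : 0 ≤ b * t₂ / t := by positivity
    have hαβ : a * t₁ / t + b * t₂ / t = 1 := by rw [← add_div, div_self ht.ne']
    have hcomb : t⁻¹ • (a • v₁ + b • v₂) =
        (a * t₁ / t) • (t₁⁻¹ • v₁) + (b * t₂ / t) • (t₂⁻¹ • v₂) := by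
      simp only [smul_add, smul_smul]
      congr 2 <;> field_simp
    refine ⟨ht, hcomb ▸ hf.1 hu₁ hu₂ hα hβ hαβ, ?_⟩
    calc a * (t₁ * f (t₁⁻¹ • v₁)) + b * (t₂ * f (t₂⁻¹ • v₂))
        = t * ((a * t₁ / t) • f (t₁⁻¹ • v₁) + (b * t₂ / t) • f (t₂⁻¹ • v₂)) := by
          simp only [smul_eq_mul]
          field_simp
      _ ≤ t * f (t⁻¹ • (a • v₁ + b • v₂)) := by
          rw [hcomb]
          exact mul_le_mul_of_nonneg_left (hf.2 hu₁ hu₂ hα hβ hαβ) ht.le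
  refine ⟨fun p hp q hq a b ha hb hab => ?_, fun p hp q hq a b ha hb hab => ?_⟩
  · obtain ⟨ht, hu, -⟩ := key hp.1 hq.1 hp.2 hq.2 ha hb hab
    exact ⟨ht, hu⟩
  · exact (key hp.1 hq.1 hp.2 hq.2 ha hb hab).2.2

theorem ConcaveOn.add_div_two_le {s : Set ℝ} {g : ℝ → ℝ} (hg : ConcaveOn ℝ s g) {x y : ℝ}
    (hx : x ∈ s) (hy : y ∈ s) : (g x + g y) / 2 ≤ g ((x + y) / 2) := by
  have := hg.2 hx hy (by norm_num : (0:ℝ) ≤ 1/2) (by norm_num : (0:ℝ) ≤ 1/2) (by norm_num)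
  simp only [smul_eq_mul] at this
  rw [show (x + y) / 2 = 1 / 2 * x + 1 / 2 * y by ring]
  linarith

theorem binEntropy_eq_div_log_two (p : ℝ) : binEntropy p = Real.binEntropy p / Real.log 2 := by
  simp only [binEntropy, Real.binEntropy, Real.logb, Real.log_inv]
  ring

theorem concaveOn_gFun : ConcaveOn ℝ (Ioi 2) gFun := by
  let φ : ℝ →ᵃ[ℝ] ℝ × ℝ := AffineMap.lineMap (0, -1) (1, -1/2)
  have hφ (x : ℝ) : φ x = (x, x / 2 - 1) := by
    simp only [φ, AffineMap.lineMap_apply_module', Prod.ext_iff]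
    constructor <;> simp; ring
  have hdomain : Ioi 2 ⊆ φ ⁻¹' {p | 0 < p.1 ∧ p.1⁻¹ • p.2 ∈ Icc 0 1} := by
    intro x (hx : 2 < x)
    simp only [mem_preimage, hφ, mem_ofPred_eq, smul_eq_mul, mem_Icc]
    refine ⟨by linarith, mul_nonneg (by positivity) (by linarith), ?_⟩
    rw [inv_mul_le_iff₀ (by linarith)]
    linarith
  have hperspective := (Real.strictConcave_binEntropy.concaveOn.perspective.comp_affineMap φ).subset
    hdomain (convex_Ioi 2)
  refine (hperspective.smul (inv_nonneg.2 (Real.log_pos one_lt_two).le)).congr fun x hx => ?_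
  have hx₀ : x ≠ 0 := (zero_lt_two.trans hx).ne'
  simp only [Function.comp_apply, hφ, smul_eq_mul, gFun, binEntropy_eq_div_log_two]
  rw [show x⁻¹ * (x / 2 - 1) = 1 / 2 - 1 / x by field_simp]
  ring

theorem gFun_concave :
    (∀ s t : ℝ, 2 < s → 2 < t → (gFun s + gFun t) / 2 ≤ gFun ((s + t) / 2)) ∧
    (∀ x ε : ℝ, 2 < x → 2 < x - |ε| → gFun (x + ε) + gFun (x - ε) ≤ 2 * gFun x) := by
  refine ⟨fun s t hs ht => concaveOn_gFun.add_div_two_le hs ht, fun x ε _ hxε => ?_⟩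
  have hsum : 2 < x + ε := by linarith [neg_abs_le ε]
  have hdiff : 2 < x - ε := by linarith [le_abs_self ε]
  have := concaveOn_gFun.add_div_two_le hsum hdiff
  rw [show (x + ε + (x - ε)) / 2 = x by ring] at this
  linarith
end

section
/- For b = 2, the critical slope α = (4/√3)·(2 − H(1/2 − √3/4)) satisfies α = H'(1/2 − √3/4), where H' is the derivative of the binary entropy function; i.e., (4/√3)·(2 − H(1/2 − √3/4)) = log₂((1/2 + √3/4)/(1/2 − √3/4)). -/
lemma binEntropy_eq_logb_mul_sub_logb_div {p : ℝ} (hp : p ≠ 0) (hq : 1 - p ≠ 0) :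
    binEntropy p =
      -Real.logb 2 (p * (1 - p)) / 2 - (1 - 2 * p) / 2 * Real.logb 2 ((1 - p) / p) := by
  rw [binEntropy, Real.logb_mul hp hq, Real.logb_div hq hp]
  ring

lemma two_sub_binEntropy_of_mul_one_sub_eq {p : ℝ} (hp : p ≠ 0) (hpq : p * (1 - p) = 1 / 16) :
    2 - binEntropy p = (1 - 2 * p) / 2 * Real.logb 2 ((1 - p) / p) := by
  have hq : 1 - p ≠ 0 := by
    rintro h
    simp [h] at hpq
  have hlog : Real.logb 2 (1 / 16) = -4 := by
    rw [show (1 / 16 : ℝ) = (2 ^ 4)⁻¹ by norm_num, Real.logb_inv, Real.logb_pow,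
      Real.logb_self_eq_one one_lt_two]
    norm_num
  rw [binEntropy_eq_logb_mul_sub_logb_div hp hq, hpq, hlog]
  ring

theorem alpha_eq_deriv_entropy :
    (4 / Real.sqrt 3) * (2 - binEntropy (1/2 - Real.sqrt 3 / 4))
      = Real.logb 2 ((1/2 + Real.sqrt 3 / 4) / (1/2 - Real.sqrt 3 / 4)) := by
  have hsq : √3 ^ 2 = 3 := Real.sq_sqrt (by norm_num)
  have hpos : 0 < √3 := Real.sqrt_pos.mpr (by norm_num)
  have hp : 1 / 2 - √3 / 4 ≠ 0 := by nlinarith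
  have hpq : (1 / 2 - √3 / 4) * (1 - (1 / 2 - √3 / 4)) = 1 / 16 := by nlinarith
  rw [two_sub_binEntropy_of_mul_one_sub_eq hp hpq,
    show 1 - (1 / 2 - √3 / 4) = 1 / 2 + √3 / 4 by ring]
  field_simp
  ring
end
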